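/- arXiv:math/0307363 — 3 statements merged into one kernel-verified Lean document; each statement's English description precedes it below -/
import Mathlib

section
/- Let h : {0,1,2}* → {0,1,2}* be the morphism defined by h(0)=12, h(1)=102, h(2)=0. Since h(1) = 102 begins with 1, h has a fixed point h^ω(1), and this fixed point is squarefree. -/
def Occurs (u w : List (Fin 3)) : Prop := u <:+: w

def SqFree (w : List (Fin 3)) : Prop :=
  ∀ x : List (Fin 3), x ≠ [] → ¬ Occurs (x ++ x) w

def OccursInf (u : List (Fin 3)) (w : ℕ → Fin 3) : Prop :=
  ∃ i : ℕ, u = (List.range u.length).map (fun j => w (i + j))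

def SqFreeInf (w : ℕ → Fin 3) : Prop :=
  ∀ x : List (Fin 3), x ≠ [] → ¬ OccursInf (x ++ x) w


def hmor (a : Fin 3) : List (Fin 3) :=
  if a = 0 then [1, 2] else if a = 1 then [1, 0, 2] else [0]

def hiter : ℕ → List (Fin 3)
  | 0 => [1]
  | n + 1 => (hiter n).flatMap hmor

/-- the fixed point h^ω(1) as an infinite word -/
def hw (i : ℕ) : Fin 3 := (hiter (i + 1)).getD i 1



/-- Thue–Morse sequence as a Bool. -/
def tb : ℕ → Bool
  | 0 => false
  | n+1 => ((n+1) % 2 == 1).xor (tb ((n+1)/2))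
decreasing_by exact Nat.div_lt_self (Nat.succ_pos n) (by norm_num)

lemma tb_two_mul (n : ℕ) : tb (2*n) = tb n := by
  cases n with
  | zero => rfl
  | succ m =>
    have e : 2*(m+1) = (2*m+1)+1 := by ring
    rw [e, tb]
    have h1 : ((2*m+1)+1) % 2 = 0 := by omega
    have h2 : ((2*m+1)+1) / 2 = m+1 := by omega
    simp [h1, h2]

lemma tb_two_mul_add_one (n : ℕ) : tb (2*n+1) = !(tb n) := by
  rw [tb]
  have h1 : (2*n+1) % 2 = 1 := by omega
  have h2 : (2*n+1) / 2 = n := by omega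
  simp [h1, h2, Bool.xor_comm]

lemma tb_no_overlap : ∀ k, 1 ≤ k → ∀ i, ¬ (∀ j ≤ k, tb (i+j) = tb (i+k+j)) := by
  intro k
  induction k using Nat.strong_induction_on with
  | _ k IH =>
  intro hk i H
  rcases Nat.even_or_odd k with ⟨m, hm⟩ | ⟨m, hm⟩
  · -- k = 2m, m ≥ 1
    have hm1 : 1 ≤ m := by omega
    rcases Nat.even_or_odd i with ⟨i', hi⟩ | ⟨i', hi⟩
    · refine IH m (by omega) hm1 i' ?_
      intro j hj
      have h1 : tb (i'+j) = tb (i + 2*j) := by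
        rw [show i + 2*j = 2*(i'+j) by omega, tb_two_mul]
      have h2 : tb (i'+m+j) = tb (i+k+2*j) := by
        rw [show i+k+2*j = 2*(i'+m+j) by omega, tb_two_mul]
      rw [h1, h2]; exact H (2*j) (by omega)
    · refine IH m (by omega) hm1 i' ?_
      intro j hj
      have h1 : tb (i'+j) = !tb (i + 2*j) := by
        rw [show i + 2*j = 2*(i'+j)+1 by omega, tb_two_mul_add_one, Bool.not_not]
      have h2 : tb (i'+m+j) = !tb (i+k+2*j) := by
        rw [show i+k+2*j = 2*(i'+m+j)+1 by omega, tb_two_mul_add_one, Bool.not_not]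
      rw [h1, h2, H (2*j) (by omega)]
  · -- k = 2m+1, odd
    have alt : ∀ n, i ≤ n → n + 1 ≤ i + k → tb n ≠ tb (n+1) := by
      intro n hn1 hn2
      rcases Nat.even_or_odd n with ⟨p, hp⟩ | ⟨p, hp⟩
      · rw [show n = 2*p by omega, show 2*p+1 = 2*p+1 from rfl, tb_two_mul, tb_two_mul_add_one]
        simp
      · have e1 : tb n = tb (n+k) := by
          have := H (n - i) (by omega)
          rwa [show i + (n-i) = n by omega, show i + k + (n-i) = n + k by omega] at this
        have e2 : tb (n+1) = tb (n+1+k) := by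
          have := H (n+1-i) (by omega)
          rwa [show i + (n+1-i) = n+1 by omega, show i + k + (n+1-i) = n+1+k by omega] at this
        have e3 : tb (n+k) = tb (p+m+1) := by
          rw [show n+k = 2*(p+m+1) by omega, tb_two_mul]
        have e4 : tb (n+1+k) = !tb (p+m+1) := by
          rw [show n+1+k = 2*(p+m+1)+1 by omega, tb_two_mul_add_one]
        rw [e1, e2, e3, e4]; simp
    have aux : ∀ j, j ≤ k → tb (i+j) = (tb i).xor (j % 2 == 1) := by
      intro j
      induction j with
      | zero => intro _; simp
      | succ j ihj =>
        intro hj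
        have h1 : tb (i+j+1) = !tb (i+j) := by
          have := alt (i+j) (by omega) (by omega)
          revert this
          cases tb (i+j+1) <;> cases tb (i+j) <;> simp
        have h2 : ((j+1) % 2 == 1) = !(j % 2 == 1) := by
          rcases Nat.even_or_odd j with ⟨p, hp⟩ | ⟨p, hp⟩
          · rw [show j % 2 = 0 by omega, show (j+1) % 2 = 1 by omega]; rfl
          · rw [show j % 2 = 1 by omega, show (j+1) % 2 = 0 by omega]; rfl
        rw [show i + (j+1) = i+j+1 by omega, h1, ihj (by omega), h2]
        cases tb i <;> cases (j % 2 == 1) <;> rfl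
    have h0 : tb i = tb (i+k) := by
      have := H 0 (by omega); simpa using this
    have hkk : tb (i+k) = !(tb i) := by
      rw [aux k (le_refl k), show k % 2 = 1 by omega]
      cases tb i <;> rfl
    rw [hkk] at h0
    exact absurd h0.symm (by cases tb i <;> simp)

lemma tb_zero : tb 0 = false := by rw [tb]
lemma tb_one : tb 1 = true := by rw [tb]; simp [tb_zero]

def d (n : ℕ) : Fin 3 := if tb n = tb (n+1) then 0 else if tb n then 2 else 1

def aT (n : ℕ) : ℕ := 2*n + (if tb n then 1 else 0)

lemma seg (j : ℕ) : hmor (d j) =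
    (List.range (aT (j+1) - aT j)).map (fun r => d (aT j + r)) := by
  have h0 : tb (2*j) = tb j := tb_two_mul j
  have h1 : tb (2*j+1) = !tb j := tb_two_mul_add_one j
  have h2 : tb (2*j+1+1) = tb (j+1) := by
    rw [show 2*j+1+1 = 2*(j+1) by ring, tb_two_mul]
  have h2' : tb (2*j+2) = tb (j+1) := by
    rw [show 2*j+2 = 2*(j+1) by ring, tb_two_mul]
  have h3 : tb (2*j+2+1) = !tb (j+1) := by
    rw [show 2*j+2+1 = 2*(j+1)+1 by ring, tb_two_mul_add_one]
  cases htj : tb j <;> cases htj1 : tb (j+1)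
  · -- (false, false) : d j = 0, block [1,2] at 2j
    have e : aT (j+1) - aT j = 2 := by simp [aT, htj, htj1]; omega
    have ea : aT j = 2*j := by simp [aT, htj]
    rw [e, ea, show List.range 2 = [0,1] from rfl]
    have dj : d j = 0 := by simp [d, htj, htj1]
    have d0 : d (2*j) = 1 := by simp [d, h0, h1, htj]
    have d1 : d (2*j+1) = 2 := by simp [d, h1, h2, htj, htj1]
    simp [dj, hmor, d0, d1]
  · -- (false, true) : d j = 1, block [1,0,2] at 2j
    have e : aT (j+1) - aT j = 3 := by simp [aT, htj, htj1]; omega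
    have ea : aT j = 2*j := by simp [aT, htj]
    rw [e, ea, show List.range 3 = [0,1,2] from rfl]
    have dj : d j = 1 := by simp [d, htj, htj1]
    have d0 : d (2*j) = 1 := by simp [d, h0, h1, htj]
    have d1 : d (2*j+1) = 0 := by simp [d, h1, h2, htj, htj1]
    have d2 : d (2*j+2) = 2 := by simp [d, h2', h3, htj1]
    simp [dj, hmor, d0, d1, d2]
  · -- (true, false) : d j = 2, block [0] at 2j+1
    have e : aT (j+1) - aT j = 1 := by simp [aT, htj, htj1]; omega
    have ea : aT j = 2*j+1 := by simp [aT, htj]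
    rw [e, ea, show List.range 1 = [0] from rfl]
    have dj : d j = 2 := by simp [d, htj, htj1]
    have d1 : d (2*j+1) = 0 := by simp [d, h1, h2, htj, htj1]
    simp [dj, hmor, d1]
  · -- (true, true) : d j = 0, block [1,2] at 2j+1
    have e : aT (j+1) - aT j = 2 := by simp [aT, htj, htj1]; omega
    have ea : aT j = 2*j+1 := by simp [aT, htj]
    rw [e, ea, show List.range 2 = [0,1] from rfl]
    have dj : d j = 0 := by simp [d, htj, htj1]
    have d1 : d (2*j+1) = 1 := by simp [d, h1, h2, htj, htj1]
    have d2 : d (2*j+1+1) = 2 := by simp [d, h2, h3, htj1]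
    simp [dj, hmor, d1, d2]

lemma aT_mono (n : ℕ) : aT n ≤ aT (n+1) := by
  unfold aT; cases tb n <;> cases tb (n+1) <;> simp <;> omega

lemma flat : ∀ n, (List.range n).flatMap (fun j => hmor (d j)) =
    (List.range (aT n)).map d := by
  intro n
  induction n with
  | zero => simp [aT, tb_zero]
  | succ n ih =>
    rw [List.range_succ, List.flatMap_append, ih]
    have : aT (n+1) = aT n + (aT (n+1) - aT n) := by
      have := aT_mono n; omega
    rw [this, List.range_add, List.map_append, List.map_map]
    simp [seg n]

def Ln : ℕ → ℕ
  | 0 => 1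
  | n+1 => aT (Ln n)

lemma hiter_eq (n : ℕ) : hiter n = (List.range (Ln n)).map d := by
  induction n with
  | zero =>
    show [1] = _
    rw [show Ln 0 = 1 from rfl, show List.range 1 = [0] from rfl]
    simp [d, tb_zero, tb_one]
  | succ n ih =>
    show (hiter n).flatMap hmor = _
    rw [ih, List.flatMap_map]
    show (List.range (Ln n)).flatMap (fun j => hmor (d j)) = _
    rw [flat]
    rfl

lemma Ln_gt (n : ℕ) : n < Ln n := by
  induction n with
  | zero => exact Nat.zero_lt_one
  | succ n ih =>
    show n + 1 < aT (Ln n)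
    unfold aT; cases tb (Ln n) <;> simp <;> omega

lemma hw_eq (n : ℕ) : hw n = d n := by
  unfold hw
  rw [hiter_eq]
  have hlt : n < Ln (n+1) := Nat.lt_trans (Nat.lt_succ_self n) (Ln_gt (n+1))
  rw [List.getD_eq_getElem _ _ (by simpa using hlt)]
  simp

lemma dD {n m : ℕ} (h : d n = d m) : (tb n = tb m) ↔ (tb (n+1) = tb (m+1)) := by
  cases h1 : tb n <;> cases h2 : tb (n+1) <;> cases h3 : tb m <;> cases h4 : tb (m+1) <;>
    simp [d, h1, h2, h3, h4] at h ⊢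

lemma dD2 {n m : ℕ} (h : d n = d m) (hne : tb n ≠ tb m) : tb n = tb (n+1) := by
  cases h1 : tb n <;> cases h2 : tb (n+1) <;> cases h3 : tb m <;> cases h4 : tb (m+1) <;>
    simp [h1, h3] at hne <;>
    simp [d, h1, h2, h3, h4] at h ⊢

lemma d_no_square (k i : ℕ) (hk : 1 ≤ k) : ¬ (∀ j, j < k → d (i+j) = d (i+k+j)) := by
  intro key
  by_cases hcase : tb i = tb (i+k)
  · -- equal case: get an overlap in tb
    have heq : ∀ j, j ≤ k → tb (i+j) = tb (i+k+j) := by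
      intro j
      induction j with
      | zero => intro _; simpa using hcase
      | succ j ihj =>
        intro hj
        have h1 := (dD (key j (by omega))).mp (ihj (by omega))
        rw [show i+(j+1) = (i+j)+1 by omega, show i+k+(j+1) = (i+k+j)+1 by omega]
        exact h1
    exact tb_no_overlap k hk i heq
  · -- unequal case
    have hne : ∀ j, j ≤ k → tb (i+j) ≠ tb (i+k+j) := by
      intro j
      induction j with
      | zero => intro _; simpa using hcase
      | succ j ihj =>
        intro hj h1
        apply ihj (by omega)
        apply (dD (key j (by omega))).mpr
        rw [show (i+j)+1 = i+(j+1) by omega, show (i+k+j)+1 = i+k+(j+1) by omega]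
        exact h1
    have chain : ∀ j, j ≤ k → tb (i+j) = tb i := by
      intro j
      induction j with
      | zero => intro _; rfl
      | succ j ihj =>
        intro hj
        have h1 : tb (i+j) = tb ((i+j)+1) :=
          dD2 (key j (by omega)) (by
            rw [show i+k+j = (i+j)+k by omega] at *
            exact fun hh => hne j (by omega) (by rw [show i+k+j = (i+j)+k by omega]; exact hh))
        rw [show i+(j+1) = (i+j)+1 by omega, ← h1, ihj (by omega)]
    have := chain k (le_refl k)
    rw [show i + k = i + k by rfl] at this
    exact hcase this.symm

theorem fixed_point_squarefree : SqFreeInf hw := by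
  intro x hx hocc
  obtain ⟨i, hxx⟩ := hocc
  set k := x.length with hk
  have hk1 : 1 ≤ k := by
    rw [hk]; exact List.length_pos_iff.mpr hx
  apply d_no_square k i hk1
  intro j hj
  have hlen : (x ++ x).length = k + k := by simp [hk]
  have get1 : ∀ p (hp : p < k + k), (x ++ x)[p]'(by omega) = hw (i + p) := by
    intro p hp
    rw [List.getElem_of_eq hxx]
    simp
  have e1 : x[j]'(by omega) = hw (i + j) := by
    have := get1 j (by omega)
    rwa [List.getElem_append_left (by omega)] at this
  have e2 : x[j]'(by omega) = hw (i + (k + j)) := by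
    have := get1 (k + j) (by omega)
    rw [List.getElem_append_right (by omega)] at this
    simp only [show k + j - x.length = j from by omega] at this
    exact this
  have : hw (i + j) = hw (i + (k + j)) := by rw [← e1, ← e2]
  rw [hw_eq, hw_eq] at this
  rw [show i + k + j = i + (k+j) by omega]
  exact this
end

section
/- The fixed point h^ω(1) of the morphism h defined by h(0)=12, h(1)=102, h(2)=0 contains no occurrence of the word 101 and no occurrence of the word 202 as a subword. -/
/-! Auxiliary development -/

def GoodT (l : List (Fin 3)) : Prop :=
  ¬ [1,0,1] <:+: l ∧ ¬ [2,0,2] <:+: l ∧ ¬ [0,2] <+: l ∧ ¬ [2] <+: l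

lemma goodT_nil : GoodT [] := by
  simp [GoodT, List.infix_nil]

lemma goodT_step (a : Fin 3) (t : List (Fin 3)) (ht : GoodT t) :
    GoodT (hmor a ++ t) := by
  obtain ⟨h1, h2, h3, h4⟩ := ht
  fin_cases a <;>
    refine ⟨?_, ?_, ?_, ?_⟩ <;>
    simp_all [hmor, GoodT, List.infix_cons_iff, List.cons_prefix_cons]

lemma goodT_flatMap (w : List (Fin 3)) : GoodT (w.flatMap hmor) := by
  induction w with
  | nil => simpa using goodT_nil
  | cons a w ih => rw [List.flatMap_cons]; exact goodT_step a _ ih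

lemma goodT_hiter (n : ℕ) : GoodT (hiter (n + 1)) := goodT_flatMap _

lemma flatMap_len_ge (w : List (Fin 3)) : w.length ≤ (w.flatMap hmor).length := by
  induction w with
  | nil => simp
  | cons a w ih =>
      rw [List.flatMap_cons, List.length_append, List.length_cons]
      have : 1 ≤ (hmor a).length := by fin_cases a <;> simp [hmor]
      omega

lemma flatMap_len_gt (w : List (Fin 3)) (h1 : (1 : Fin 3) ∈ w) :
    w.length + 2 ≤ (w.flatMap hmor).length := by
  induction w with
  | nil => simp at h1
  | cons a w ih =>
      rw [List.flatMap_cons, List.length_append, List.length_cons]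
      rcases List.mem_cons.mp h1 with h | h
      · have := flatMap_len_ge w
        have : (hmor a).length = 3 := by rw [← h]; simp [hmor]
        omega
      · have := ih h
        have : 1 ≤ (hmor a).length := by fin_cases a <;> simp [hmor]
        omega

lemma one_mem_hiter (n : ℕ) : (1 : Fin 3) ∈ hiter n := by
  induction n with
  | zero => simp [hiter]
  | succ n ih =>
      show (1 : Fin 3) ∈ (hiter n).flatMap hmor
      exact List.mem_flatMap.mpr ⟨1, ih, by simp [hmor]⟩

lemma hiter_len (n : ℕ) : n + 1 ≤ (hiter n).length := by
  induction n with
  | zero => simp [hiter]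
  | succ n ih =>
      have := flatMap_len_gt (hiter n) (one_mem_hiter n)
      show n + 2 ≤ ((hiter n).flatMap hmor).length
      omega

lemma hiter_prefix_succ (n : ℕ) : hiter n <+: hiter (n + 1) := by
  induction n with
  | zero => decide
  | succ n ih =>
      obtain ⟨r, hr⟩ := ih
      show (hiter n).flatMap hmor <+: (hiter (n+1)).flatMap hmor
      exact ⟨r.flatMap hmor, by rw [← List.flatMap_append, hr]⟩

lemma hiter_prefix (m n : ℕ) (h : m ≤ n) : hiter m <+: hiter n := by
  induction n with
  | zero => rw [Nat.le_zero.mp h]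
  | succ n ih =>
      rcases Nat.lt_or_ge m (n+1) with h' | h'
      · exact (ih (by omega)).trans (hiter_prefix_succ n)
      · rw [show m = n + 1 by omega]

lemma hw_eq_s4 (k n : ℕ) (h : k + 1 ≤ n) : hw k = (hiter n).getD k 1 := by
  obtain ⟨r, hr⟩ := hiter_prefix (k+1) n h
  have hk : k < (hiter (k+1)).length := by have := hiter_len (k+1); omega
  rw [hw, ← hr, List.getD_append _ _ _ _ hk]

lemma triple_infix (l : List (Fin 3)) (i : ℕ) (a b c : Fin 3)
    (hlen : i + 3 ≤ l.length)
    (ha : l.getD i 1 = a) (hb : l.getD (i+1) 1 = b) (hc : l.getD (i+2) 1 = c) :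
    [a, b, c] <:+: l := by
  have ha' : l[i]'(by omega) = a := by
    rw [← List.getD_eq_getElem l 1 (by omega : i < l.length)]; exact ha
  have hb' : l[i+1]'(by omega) = b := by
    rw [← List.getD_eq_getElem l 1 (by omega : i+1 < l.length)]; exact hb
  have hc' : l[i+2]'(by omega) = c := by
    rw [← List.getD_eq_getElem l 1 (by omega : i+2 < l.length)]; exact hc
  have heq : (l.drop i).take 3 = [a, b, c] := by
    apply List.ext_getElem
    · simp; omega
    · intro n h1 h2
      simp only [List.length_cons, List.length_nil] at h2
      interval_cases n <;>
        simp only [List.getElem_take, List.getElem_drop] <;>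
        simp [ha', hb', hc']
  rw [← heq]
  exact ((l.drop i).take_prefix 3).isInfix.trans (l.drop_suffix i).isInfix

lemma occurs_infix (i : ℕ) (a b c : Fin 3)
    (h : [a, b, c] = (List.range 3).map (fun j => hw (i + j))) :
    [a, b, c] <:+: hiter (i + 3) := by
  apply triple_infix _ i
  · have := hiter_len (i+3); omega
  · have := congrArg (fun t => t.getD 0 (1:Fin 3)) h
    simpa [List.range_succ, hw_eq_s4 i (i+3) (by omega)] using this.symm
  · have := congrArg (fun t => t.getD 1 (1:Fin 3)) h
    simpa [List.range_succ, hw_eq_s4 (i+1) (i+3) (by omega)] using this.symm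
  · have := congrArg (fun t => t.getD 2 (1:Fin 3)) h
    simpa [List.range_succ, hw_eq_s4 (i+2) (i+3) (by omega), show i+1+1 = i+2 by omega] using this.symm

theorem fixed_point_avoids_101_202 :
    ¬ OccursInf [1,0,1] hw ∧ ¬ OccursInf [2,0,2] hw := by
  constructor
  · rintro ⟨i, h⟩
    exact (goodT_hiter (i + 2)).1 (by simpa using occurs_infix i 1 0 1 (by simpa using h))
  · rintro ⟨i, h⟩
    exact (goodT_hiter (i + 2)).2.1 (by simpa using occurs_infix i 2 0 2 (by simpa using h))
end

section
/- For any three distinct letters a, b, c of {0,1,2}, there exists an infinite squarefree word over {0,1,2} that contains no occurrence of the word abca and no occurrence of the word acba as a subword. -/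
def tm : ℕ → Bool
  | 0 => false
  | (n+1) => if (n+1) % 2 = 0 then tm ((n+1)/2) else !tm ((n+1)/2)
decreasing_by all_goals omega

lemma tm_even (n : ℕ) : tm (2*n) = tm n := by
  cases n with
  | zero => rfl
  | succ m =>
    rw [show 2*(m+1) = (2*m+1)+1 by ring, tm]
    have h1 : (2*m+1+1) % 2 = 0 := by omega
    have h2 : (2*m+1+1) / 2 = m+1 := by omega
    rw [if_pos h1, h2]

lemma tm_odd (n : ℕ) : tm (2*n+1) = !tm n := by
  rw [show 2*n+1 = (2*n)+1 by ring, tm]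
  have h1 : ¬ ((2*n+1) % 2 = 0) := by omega
  have h2 : (2*n+1) / 2 = n := by omega
  rw [if_neg h1, h2]

lemma tm_pair (n : ℕ) : tm (2*n) ≠ tm (2*n+1) := by
  rw [tm_even, tm_odd]
  cases tm n <;> simp

theorem tm_no_overlap : ∀ p, 0 < p → ∀ i, ¬ (∀ j ≤ p, tm (i+j) = tm (i+j+p)) := by
  intro p
  induction p using Nat.strong_induction_on with
  | _ p IH =>
  intro hp i H
  rcases Nat.even_or_odd p with ⟨q, hq⟩ | ⟨k, hk⟩
  · -- p = q + q even
    have hq0 : 0 < q := by omega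
    refine IH q (by omega) hq0 (i/2) ?_
    intro j hj
    rcases Nat.even_or_odd i with ⟨m, hm⟩ | ⟨m, hm⟩
    · have hH : tm (2*(m+j)) = tm (2*(m+j+q)) := by
        convert H (2*j) (by omega) using 2 <;> omega
      rw [tm_even, tm_even] at hH
      rw [show i/2 = m by omega]
      exact hH
    · have hH : tm (2*(m+j)+1) = tm (2*(m+j+q)+1) := by
        convert H (2*j) (by omega) using 2 <;> omega
      rw [tm_odd, tm_odd] at hH
      rw [show i/2 = m by omega]
      simpa using hH
  · -- p = 2*k+1 odd
    by_cases hk0 : k = 0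
    · -- p = 1
      subst hk0
      rcases Nat.even_or_odd i with ⟨m, hm⟩ | ⟨m, hm⟩
      · exact tm_pair m (by convert H 0 (by omega) using 2 <;> omega)
      · exact tm_pair (m+1) (by convert H 1 (by omega) using 2 <;> omega)
    · -- k ≥ 1, p ≥ 3
      have key : ∀ m, i ≤ 2*m → 2*m+1 ≤ i + p → tm (m+k) = tm (m+k+1) := by
        intro m h1 h2
        have hA : tm (2*m) = tm (2*(m+k)+1) := by
          convert H (2*m - i) (by omega) using 2 <;> omega
        have hB : tm (2*m+1) = tm (2*(m+k+1)) := by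
          convert H (2*m + 1 - i) (by omega) using 2 <;> omega
        rw [tm_even, tm_odd] at hA
        rw [tm_odd, tm_even] at hB
        -- hA : tm m = !tm (m+k), hB : !tm m = tm (m+k+1)
        rw [hA] at hB
        simpa using hB
      by_cases hsp : i % 2 = 1 ∧ k = 1
      · -- p = 3, i odd : direct contradiction
        obtain ⟨hodd, hk1⟩ := hsp
        obtain ⟨m, hm⟩ : ∃ m, i = 2*m+1 := ⟨i/2, by omega⟩
        have h1 : tm (2*(m+1)) = tm (2*(m+2)+1) := by
          convert H 1 (by omega) using 2 <;> omega
        have h2 : tm (2*(m+1)+1) = tm (2*(m+3)) := by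
          convert H 2 (by omega) using 2 <;> omega
        have h3 : tm (2*(m+2)) = tm (2*(m+3)+1) := by
          convert H 3 (by omega) using 2 <;> omega
        rw [tm_even, tm_odd] at h1
        rw [tm_odd, tm_even] at h2
        rw [tm_even, tm_odd] at h3
        -- h1 : tm (m+1) = !tm (m+2), h2 : !tm (m+1) = tm (m+3), h3 : tm (m+2) = !tm (m+3)
        rw [h3] at h1
        simp at h1
        rw [← h2] at h1
        simp at h1
      · -- two consecutive valid m's
        have e1 := key ((i+1)/2) (by omega) (by omega)
        have e2 := key ((i+1)/2+1) (by omega) (by omega)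
        refine IH 1 (by omega) (by omega) ((i+1)/2+k) ?_
        intro j hj
        interval_cases j
        · simpa using e1
        · convert e2 using 2 <;> omega

def zz (n : ℕ) : Fin 3 := if tm n = tm (n+1) then 2 else if tm n then 1 else 0

lemma zz_two_odd {n : ℕ} (h : zz n = 2) : n % 2 = 1 := by
  rcases Nat.even_or_odd n with ⟨m, hm⟩ | ⟨m, hm⟩
  · exfalso
    have hne : ¬ (tm n = tm (n+1)) := by
      rw [show n = 2*m by omega, show 2*m+1 = 2*m+1 from rfl]
      exact tm_pair m
    rw [zz, if_neg hne] at h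
    split at h <;> exact absurd h (by decide)
  · omega

lemma zz_two_step {n : ℕ} (h : zz n = 2) : tm (n+1) = tm n := by
  by_cases c : tm n = tm (n+1)
  · exact c.symm
  · exfalso
    rw [zz, if_neg c] at h
    split at h <;> exact absurd h (by decide)

lemma zz_eq_of {m n : ℕ} (h : zz m = zz n) (h2 : zz m ≠ 2) :
    tm m = tm n ∧ tm (m+1) = tm (n+1) := by
  by_cases c1 : tm m = tm (m+1)
  · exfalso; exact h2 (by rw [zz, if_pos c1])
  · by_cases c2 : tm n = tm (n+1)
    · exfalso
      rw [zz, if_neg c1, zz, if_pos c2] at h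
      split at h <;> exact absurd h (by decide)
    · rw [zz, if_neg c1, zz, if_neg c2] at h
      have hmn : tm m = tm n := by
        cases hx : tm m <;> cases hy : tm n <;> rw [hx, hy] at h <;> simp_all
      refine ⟨hmn, ?_⟩
      cases hx : tm m <;> cases hy : tm (m+1) <;> cases hz : tm (n+1) <;> simp_all

theorem zz_sqfree : ∀ p, 0 < p → ∀ i, ¬ (∀ j < p, zz (i+j) = zz (i+j+p)) := by
  intro p hp i K
  by_cases hall : ∀ j < p, zz (i+j) = 2
  · have h0 : zz i = 2 := by simpa using hall 0 hp
    have h0' : zz (i+p) = 2 := by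
      have := K 0 hp
      simp only [Nat.add_zero] at this
      rw [← this]; exact h0
    have o1 := zz_two_odd h0
    have o2 := zz_two_odd h0'
    have hp2 : 2 ≤ p := by omega
    have h1 : zz (i+1) = 2 := hall 1 (by omega)
    have o3 := zz_two_odd h1
    omega
  · push_neg at hall
    obtain ⟨j₀, hj₀, hne⟩ := hall
    have base : tm (i+j₀) = tm (i+j₀+p) := (zz_eq_of (K j₀ hj₀) hne).1
    have up : ∀ j, j < p → tm (i+j) = tm (i+j+p) → tm (i+(j+1)) = tm (i+(j+1)+p) := by
      intro j hj hE
      by_cases h2 : zz (i+j) = 2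
      · have ha := zz_two_step h2
        have h2' : zz (i+j+p) = 2 := by rw [← K j hj]; exact h2
        have hb := zz_two_step h2'
        have goal' : tm (i+j+1) = tm (i+j+p+1) := by rw [ha, hb]; exact hE
        convert goal' using 2 <;> omega
      · have := (zz_eq_of (K j hj) h2).2
        convert this using 2 <;> omega
    have down : ∀ j, j < p → tm (i+(j+1)) = tm (i+(j+1)+p) → tm (i+j) = tm (i+j+p) := by
      intro j hj hE
      by_cases h2 : zz (i+j) = 2
      · have ha := zz_two_step h2
        have h2' : zz (i+j+p) = 2 := by rw [← K j hj]; exact h2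
        have hb := zz_two_step h2'
        have hE' : tm (i+j+1) = tm (i+j+p+1) := by convert hE using 2 <;> omega
        rw [ha, hb] at hE'
        exact hE'
      · exact (zz_eq_of (K j hj) h2).1
    have upAll : ∀ d, j₀ + d ≤ p → tm (i+(j₀+d)) = tm (i+(j₀+d)+p) := by
      intro d
      induction d with
      | zero => intro _; simpa using base
      | succ e ihe =>
        intro hle
        have := up (j₀+e) (by omega) (ihe (by omega))
        convert this using 2 <;> omega
    have downAll : ∀ d, d ≤ j₀ → tm (i+(j₀-d)) = tm (i+(j₀-d)+p) := by
      intro d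
      induction d with
      | zero => intro _; simpa using base
      | succ e ihe =>
        intro hle
        have := down (j₀-(e+1)) (by omega) (by
          convert ihe (by omega) using 2 <;> omega)
        exact this
    refine tm_no_overlap p hp i ?_
    intro j hj
    rcases le_or_gt j j₀ with h | h
    · have := downAll (j₀ - j) (by omega)
      convert this using 2 <;> omega
    · have := upAll (j - j₀) (by omega)
      convert this using 2 <;> omega

def pmap (a b c : Fin 3) : Fin 3 → Fin 3 :=
  fun x => if x = 2 then a else if x = 1 then b else c

lemma pmap0 (a b c : Fin 3) : pmap a b c 0 = c := rfl
lemma pmap1 (a b c : Fin 3) : pmap a b c 1 = b := rfl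
lemma pmap2 (a b c : Fin 3) : pmap a b c 2 = a := rfl

lemma fin3_cases (x : Fin 3) : x = 0 ∨ x = 1 ∨ x = 2 := by omega

theorem exists_inf_squarefree_avoiding_abca_acba (a b c : Fin 3)
    (hab : a ≠ b) (hac : a ≠ c) (hbc : b ≠ c) :
    ∃ w : ℕ → Fin 3, SqFreeInf w ∧ ¬ OccursInf [a,b,c,a] w ∧ ¬ OccursInf [a,c,b,a] w := by
  have πinj : ∀ x y : Fin 3, pmap a b c x = pmap a b c y → x = y := by
    intro x y hxy
    rcases fin3_cases x with hx|hx|hx <;> rcases fin3_cases y with hy|hy|hy <;>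
      subst hx <;> subst hy <;>
      simp only [pmap0, pmap1, pmap2] at hxy <;>
      first
        | rfl
        | exact absurd hxy hbc | exact absurd hxy.symm hbc
        | exact absurd hxy hab | exact absurd hxy.symm hab
        | exact absurd hxy hac | exact absurd hxy.symm hac
  have πa : ∀ v : Fin 3, pmap a b c v = a → v = 2 := by
    intro v hv
    rcases fin3_cases v with h|h|h <;> subst h <;>
      simp only [pmap0, pmap1, pmap2] at hv
    · exact absurd hv.symm hac
    · exact absurd hv.symm hab
    · rfl
  refine ⟨fun n => pmap a b c (zz n), ?_, ?_, ?_⟩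
  · -- squarefree
    rintro x hx ⟨i, hocc⟩
    have hp0 : 0 < x.length := List.length_pos_iff.mpr hx
    refine zz_sqfree x.length hp0 i ?_
    intro j hj
    have hlen : (x ++ x).length = x.length + x.length := by simp
    have get1 : ∀ (m : ℕ), m < x.length + x.length →
        (x ++ x)[m]? = some (pmap a b c (zz (i + m))) := by
      intro m hm
      rw [hocc, List.getElem?_map, List.getElem?_range (by omega : m < (x ++ x).length)]
      rfl
    have e1 : (x ++ x)[j]? = x[j]? := List.getElem?_append_left (by omega)
    have e2 : (x ++ x)[x.length + j]? = x[j]? := by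
      rw [List.getElem?_append_right (by omega : x.length ≤ x.length + j)]
      congr 1
      omega
    have heq : some (pmap a b c (zz (i + j))) = some (pmap a b c (zz (i + (x.length + j)))) := by
      rw [← get1 j (by omega), ← get1 (x.length + j) (by omega), e1, e2]
    have heq2 := πinj _ _ (Option.some.inj heq)
    convert heq2 using 2
    omega
  · -- no abca
    rintro ⟨i, hocc⟩
    have hr : List.range ([a,b,c,a].length) = [0,1,2,3] := rfl
    rw [hr] at hocc
    simp only [List.map_cons, List.map_nil, List.cons.injEq, List.nil_eq] at hocc
    have o1 := zz_two_odd (πa _ hocc.1.symm)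
    have o2 := zz_two_odd (πa _ hocc.2.2.2.1.symm)
    omega
  · -- no acba
    rintro ⟨i, hocc⟩
    have hr : List.range ([a,c,b,a].length) = [0,1,2,3] := rfl
    rw [hr] at hocc
    simp only [List.map_cons, List.map_nil, List.cons.injEq, List.nil_eq] at hocc
    have o1 := zz_two_odd (πa _ hocc.1.symm)
    have o2 := zz_two_odd (πa _ hocc.2.2.2.1.symm)
    omega
end
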